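/- For α > 1, the function ρ(φ) = (∑_{k≥0} k φ^k / a(k)) / (∑_{k≥0} φ^k / a(k)) is strictly increasing on (0,1). -/

import Mathlib

/-!
Write `F r = ∑ c k r^k` and `G r = ∑ k c k r^k` with nonnegative weights `c`. For `p < q`,
expanding the products as double series and symmetrising in the two indices gives
`2 (G q F p - G p F q) = ∑_{j,k} c j c k (k - j) (q^k p^j - q^j p^k)`.
Every term is nonnegative, because `k - j` and `q^k p^j - q^j p^k` have the same sign, and the term
of two indices carrying positive weight is positive; hence `G p / F p < G q / F q`.
-/

open Set

lemma sub_mul_pow_sub_pow_pos {p q : ℝ} (hp : 0 < p) (hpq : p < q) {i j : ℕ} (hij : i < j) :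
    0 < ((j : ℝ) - i) * (q ^ j * p ^ i - q ^ i * p ^ j) := by
  obtain ⟨m, hm, rfl⟩ : ∃ m, 0 < m ∧ j = i + m := ⟨j - i, by omega, by omega⟩
  have hfactor : q ^ (i + m) * p ^ i - q ^ i * p ^ (i + m) = q ^ i * p ^ i * (q ^ m - p ^ m) := by
    ring
  rw [hfactor]
  have hqp : p ^ m < q ^ m := pow_lt_pow_left₀ hpq hp.le hm.ne'
  have hq : 0 < q := hp.trans hpq
  push_cast
  exact mul_pos (by simp [hm]) (by positivity [sub_pos.2 hqp])

lemma sub_mul_pow_sub_pow_nonneg {p q : ℝ} (hp : 0 < p) (hpq : p < q) (i j : ℕ) :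
    0 ≤ ((j : ℝ) - i) * (q ^ j * p ^ i - q ^ i * p ^ j) := by
  rcases lt_trichotomy i j with hij | rfl | hji
  · exact (sub_mul_pow_sub_pow_pos hp hpq hij).le
  · simp
  · have := (sub_mul_pow_sub_pow_pos hp hpq hji).le
    linarith [show ((i : ℝ) - j) * (q ^ i * p ^ j - q ^ j * p ^ i)
      = ((j : ℝ) - i) * (q ^ j * p ^ i - q ^ i * p ^ j) by ring]

section WeightedSeries

lemma Summable.mul_left_of_nonneg_of_le_one {c f : ℕ → ℝ} (hf : Summable f) (hf0 : ∀ k, 0 ≤ f k)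
    (hc0 : ∀ k, 0 ≤ c k) (hc1 : ∀ k, c k ≤ 1) : Summable fun k ↦ c k * f k :=
  hf.of_nonneg_of_le (fun k ↦ mul_nonneg (hc0 k) (hf0 k))
    (fun k ↦ mul_le_of_le_one_left (hf0 k) (hc1 k))

lemma hasSum_mul_of_nonneg {ι κ : Type*} {f : ι → ℝ} {g : κ → ℝ} (hf : Summable f)
    (hg : Summable g) (hf0 : 0 ≤ f) (hg0 : 0 ≤ g) :
    HasSum (fun x : ι × κ ↦ f x.1 * g x.2) ((∑' i, f i) * ∑' k, g k) :=
  hf.hasSum.mul hg.hasSum (hf.mul_of_nonneg hg hf0 hg0)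

variable {c : ℕ → ℝ} {p q : ℝ}

lemma hasSum_two_mul_sub_mul_tsum (hc : ∀ k, 0 ≤ c k) (hp : 0 ≤ p) (hq : 0 ≤ q)
    (hFp : Summable fun k ↦ c k * p ^ k) (hFq : Summable fun k ↦ c k * q ^ k)
    (hGp : Summable fun k ↦ c k * (k * p ^ k)) (hGq : Summable fun k ↦ c k * (k * q ^ k)) :
    HasSum (fun x : ℕ × ℕ ↦
        c x.1 * c x.2 * (((x.1 : ℝ) - x.2) * (q ^ x.1 * p ^ x.2 - q ^ x.2 * p ^ x.1)))
      (2 * ((∑' k, c k * (k * q ^ k)) * (∑' k, c k * p ^ k)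
        - (∑' k, c k * (k * p ^ k)) * ∑' k, c k * q ^ k)) := by
  have hF : ∀ r : ℝ, 0 ≤ r → ∀ k, 0 ≤ c k * r ^ k :=
    fun r hr k ↦ mul_nonneg (hc k) (pow_nonneg hr k)
  have hG : ∀ r : ℝ, 0 ≤ r → ∀ k : ℕ, 0 ≤ c k * (k * r ^ k) :=
    fun r hr k ↦ mul_nonneg (hc k) (mul_nonneg k.cast_nonneg (pow_nonneg hr k))
  have hGqFp := hasSum_mul_of_nonneg hGq hFp (hG q hq) (hF p hp)
  have hFpGq := hasSum_mul_of_nonneg hFp hGq (hF p hp) (hG q hq)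
  have hGpFq := hasSum_mul_of_nonneg hGp hFq (hG p hp) (hF q hq)
  have hFqGp := hasSum_mul_of_nonneg hFq hGp (hF q hq) (hG p hp)
  have key := (hGqFp.add hFpGq).sub (hGpFq.add hFqGp)
  rw [show ∀ A B C D : ℝ, 2 * (A * B - C * D) = A * B + B * A - (C * D + D * C) by
    intros; ring]
  exact key.congr_fun fun x ↦ by ring

theorem strictMonoOn_tsum_nat_mul_div_tsum (hc : ∀ k, 0 ≤ c k) {i j : ℕ} (hij : i < j)
    (hi : 0 < c i) (hj : 0 < c j) {s : Set ℝ} (hs : s ⊆ Ioi 0)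
    (hF : ∀ r ∈ s, Summable fun k ↦ c k * r ^ k)
    (hG : ∀ r ∈ s, Summable fun k ↦ c k * (k * r ^ k)) :
    StrictMonoOn (fun r ↦ (∑' k, c k * (k * r ^ k)) / ∑' k, c k * r ^ k) s := by
  have hF_pos : ∀ r ∈ s, 0 < ∑' k, c k * r ^ k := fun r hr ↦
    (hF r hr).tsum_pos (fun k ↦ mul_nonneg (hc k) (pow_nonneg (hs hr).le k)) i
      (mul_pos hi (pow_pos (hs hr) i))
  intro p hp q hq hpq
  have hp0 : 0 < p := hs hp
  rw [div_lt_div_iff₀ (hF_pos p hp) (hF_pos q hq)]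
  have hsum := hasSum_two_mul_sub_mul_tsum hc hp0.le (hp0.trans hpq).le
    (hF p hp) (hF q hq) (hG p hp) (hG q hq)
  have hterm_nonneg : ∀ x : ℕ × ℕ, 0 ≤
      c x.1 * c x.2 * (((x.1 : ℝ) - x.2) * (q ^ x.1 * p ^ x.2 - q ^ x.2 * p ^ x.1)) :=
    fun x ↦ mul_nonneg (mul_nonneg (hc _) (hc _)) (sub_mul_pow_sub_pow_nonneg hp0 hpq x.2 x.1)
  have hterm_pos := mul_pos (mul_pos hj hi) (sub_mul_pow_sub_pow_pos hp0 hpq hij)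
  have := hasSum_lt (i := (j, i)) hterm_nonneg hterm_pos hasSum_zero hsum
  linarith

end WeightedSeries

/-- For α > 1, the density ρ(φ) = (∑_{k≥0} k φ^k/a(k)) / (∑_{k≥0} φ^k/a(k))
is strictly increasing on (0,1). -/
theorem stmt_4 (α : ℝ) (hα : 1 < α) (a : ℕ → ℝ)
    (ha0 : a 0 = 1) (ha : ∀ k : ℕ, 1 ≤ k → a k = (k : ℝ) ^ α) :
    StrictMonoOn
      (fun φ : ℝ => (∑' k : ℕ, (k : ℝ) * φ ^ k / a k) / (∑' k : ℕ, φ ^ k / a k))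
      (Set.Ioo 0 1) := by
  have ha_ge : ∀ k, 1 ≤ a k := by
    rintro (_ | k)
    · exact ha0.ge
    · rw [ha _ k.succ_pos]
      exact Real.one_le_rpow (by simp) (by linarith)
  have hc : ∀ k, 0 ≤ (a k)⁻¹ := fun k ↦ inv_nonneg.2 (zero_le_one.trans (ha_ge k))
  have hc_le : ∀ k, (a k)⁻¹ ≤ 1 := fun k ↦ inv_le_one_of_one_le₀ (ha_ge k)
  have hF : ∀ r ∈ Ioo (0 : ℝ) 1, Summable fun k ↦ (a k)⁻¹ * r ^ k := fun r hr ↦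
    (summable_geometric_of_lt_one hr.1.le hr.2).mul_left_of_nonneg_of_le_one
      (fun k ↦ pow_nonneg hr.1.le k) hc hc_le
  have hG : ∀ r ∈ Ioo (0 : ℝ) 1, Summable fun k ↦ (a k)⁻¹ * (k * r ^ k) := fun r hr ↦ by
    have hr_norm : ‖r‖ < 1 := by rw [Real.norm_of_nonneg hr.1.le]; exact hr.2
    have hsum : Summable fun k : ℕ ↦ (k : ℝ) * r ^ k := by
      simpa using summable_pow_mul_geometric_of_norm_lt_one 1 hr_norm
    exact hsum.mul_left_of_nonneg_of_le_one (fun k ↦ by positivity [hr.1.le]) hc hc_le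
  have hc0 : 0 < (a 0)⁻¹ := by simp [ha0]
  have hc1 : 0 < (a 1)⁻¹ := by simp [ha 1 le_rfl]
  simpa only [inv_mul_eq_div] using
    strictMonoOn_tsum_nat_mul_div_tsum hc zero_lt_one hc0 hc1 (fun _ hr ↦ hr.1) hF hG
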